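/- Secrecy of the (3,5) quantum secret sharing code (denial part of Proposition 8): let C5 be the cycle graph on vertices {1,…,5}, and for a unit vector (α,β) ∈ ℂ² let |S⟩ := α|G_{(0,0,0,0,0)}⟩ + β|G_{(1,1,1,1,1)}⟩ ∈ H_5. Then for every subset V' ⊆ {1,…,5} with |V'| = 2, the reduced state is maximally mixed and independent of the secret: Tr_{V∖V'}(|S⟩⟨S|) = Id_4/4 for all unit (α,β). -/

import Mathlib

noncomputable section

open scoped ComplexConjugate

/-- The Hilbert space of qubits indexed by `V`, as functions from bit strings to `ℂ`. -/
abbrev QState (V : Type) : Type := (V → Fin 2) → ℂ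

/-- The diagonal operator with diagonal entries `d`. -/
def diagOp {V : Type} (d : (V → Fin 2) → ℂ) : QState V →ₗ[ℂ] QState V where
  toFun f := fun x => d x * f x
  map_add' f g := by funext x; simp [mul_add]
  map_smul' c f := by funext x; simp [smul_eq_mul]; ring

/-- The Pauli `Z` operator on qubit `i`. -/
def Zop {V : Type} (i : V) : QState V →ₗ[ℂ] QState V :=
  diagOp fun x => (-1 : ℂ) ^ (x i : ℕ)

/-- The Pauli `X` operator on qubit `i` (bit flip). -/
def Xop {V : Type} [DecidableEq V] (i : V) : QState V →ₗ[ℂ] QState V where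
  toFun f := fun x => f (Function.update x i (x i + 1))
  map_add' f g := rfl
  map_smul' c f := rfl

/-- The phase gate `S` on qubit `i`, sending `|x⟩` to `(-i)^(x i) |x⟩`. -/
def Sop {V : Type} (i : V) : QState V →ₗ[ℂ] QState V :=
  diagOp fun x => (-Complex.I) ^ (x i : ℕ)

/-- The Pauli `Y` operator on qubit `i`, `Y = i·X·Z`. -/
def Yop {V : Type} [DecidableEq V] (i : V) : QState V →ₗ[ℂ] QState V :=
  Complex.I • (Xop i ∘ₗ Zop i)

/-- `qVal G x` is the number of edges of `G` both of whose endpoints carry bit 1 in `x`. -/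
def qVal {V : Type} (G : SimpleGraph V) (x : V → Fin 2) : ℕ :=
  Nat.card {e : Sym2 V // e ∈ G.edgeSet ∧ ∀ v ∈ e, x v = 1}

/-- The graph state `|G⟩`, with amplitudes `2^{-n/2} (-1)^{q_G(x)}`. -/
def graphState {V : Type} [Fintype V] (G : SimpleGraph V) : QState V :=
  fun x => (((Real.sqrt 2)⁻¹ ^ Fintype.card V : ℝ) : ℂ) * (-1 : ℂ) ^ qVal G x

/-- The labeled/encoded graph state `|𝒢_ℓ⟩ = (∏_i Z_i^{ℓ_i}) (∏_{j ∈ Vsq} S_j) |G⟩`,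
with square-vertex set `Vsq`. -/
def encSq {V : Type} [Fintype V] (G : SimpleGraph V) (Vsq : Set V) (ℓ : V → Fin 2) : QState V :=
  fun x => (-1 : ℂ) ^ Nat.card {i : V // ℓ i = 1 ∧ x i = 1}
    * (-Complex.I) ^ Nat.card {j : V // j ∈ Vsq ∧ x j = 1}
    * graphState G x

/-- The encoded graph state `|G_ℓ⟩` (no square vertices). -/
def encG {V : Type} [Fintype V] (G : SimpleGraph V) (ℓ : V → Fin 2) : QState V :=
  encSq G ∅ ℓ

open Classical in
/-- The stabilizer operator of vertex `i`: `X_i ∏_{j ∈ N_i} Z_j` for circular vertices,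
`Y_i ∏_{j ∈ N_i} Z_j` for square vertices (`i ∈ Vsq`). -/
def Kop {V : Type} [DecidableEq V] (G : SimpleGraph V) (Vsq : Set V) (i : V) :
    QState V →ₗ[ℂ] QState V :=
  (if i ∈ Vsq then Yop i else Xop i) ∘ₗ
    diagOp fun x => (-1 : ℂ) ^ Nat.card {j : V // G.Adj i j ∧ x j = 1}

/-- Merge a bit string on `P` with a bit string on the complement of `P`. -/
def mergeBits {V : Type} [DecidableEq V] (P : Finset V) (a : {i // i ∈ P} → Fin 2)
    (c : {i // i ∉ P} → Fin 2) : V → Fin 2 :=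
  fun i => if h : i ∈ P then a ⟨i, h⟩ else c ⟨i, h⟩

/-- The reduced density matrix of the pure state `ψ` on the qubits in `P`:
`(a, b) ↦ ∑_c ⟨a⊔c|ψ⟩⟨ψ|b⊔c⟩`. -/
def red {V : Type} [Fintype V] [DecidableEq V] (P : Finset V) (ψ : QState V) :
    ({i // i ∈ P} → Fin 2) → ({i // i ∈ P} → Fin 2) → ℂ :=
  fun a b => ∑ c : {i // i ∉ P} → Fin 2, ψ (mergeBits P a c) * conj (ψ (mergeBits P b c))

/-- The computational basis vector `|y⟩`. -/
def basisVec {V : Type} [Fintype V] [DecidableEq V] (y : V → Fin 2) : QState V :=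
  fun x => if x = y then 1 else 0

/-- The matrix entry `⟨x|A|y⟩` of an operator. -/
def opEntry {V : Type} [Fintype V] [DecidableEq V] (A : QState V →ₗ[ℂ] QState V)
    (x y : V → Fin 2) : ℂ := A (basisVec y) x

/-- `A` acts trivially outside `P`: it equals `M ⊗ Id` for some operator `M` on the
qubits in `P`. -/
def trivialOutside {V : Type} [Fintype V] [DecidableEq V] (P : Finset V)
    (A : QState V →ₗ[ℂ] QState V) : Prop :=
  ∃ M : ({i // i ∈ P} → Fin 2) → ({i // i ∈ P} → Fin 2) → ℂ,
    ∀ a b c c', opEntry A (mergeBits P a c) (mergeBits P b c') = if c = c' then M a b else 0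

/-- The product `∏_{i ∈ T} K_i` of (commuting) operators, taken in sorted order. -/
def prodOps {V : Type} [LinearOrder V] (T : Finset V)
    (K : V → QState V →ₗ[ℂ] QState V) : QState V →ₗ[ℂ] QState V :=
  (T.sort (· ≤ ·)).foldr (fun i acc => K i ∘ₗ acc) LinearMap.id


/-- The cycle graph on `Fin n` (consecutive vertices mod `n` are adjacent). -/
def cycG (n : ℕ) [NeZero n] : SimpleGraph (Fin n) where
  Adj a b := a ≠ b ∧ (b = a + 1 ∨ a = b + 1)
  symm := ⟨by intro a b h; exact ⟨h.1.symm, h.2.symm⟩⟩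
  loopless := ⟨by intro a h; exact h.1 rfl⟩

/-!
The amplitude of `|G_ℓ⟩` at `x` is `2^{-5/2} (-1)^{ℓ |x| + q(x)}`, so by sesquilinearity the
reduced state of `α|G_0⟩ + β|G_1⟩` is a combination, with coefficients `αᾱ, αβ̄, βᾱ, ββ̄`, of the
partial overlaps `∑_c ⟨a⊔c|G_ℓ⟩⟨G_ℓ'|b⊔c⟩`. Each of these is a character sum over the three
traced-out bits, equal to `δ_{ℓℓ'} δ_{ab} / 4`; hence the reduced state is `(|α|² + |β|²) Id/4`.
-/

open Finset

section PartialOverlap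

variable {V : Type} [Fintype V] [DecidableEq V] (P : Finset V)

def redCross (ψ φ : QState V) : ({i // i ∈ P} → Fin 2) → ({i // i ∈ P} → Fin 2) → ℂ :=
  fun a b => ∑ c : {i // i ∉ P} → Fin 2, ψ (mergeBits P a c) * conj (φ (mergeBits P b c))

theorem red_smul_add_smul (α β : ℂ) (ψ φ : QState V) (a b : {i // i ∈ P} → Fin 2) :
    red P (α • ψ + β • φ) a b =
      α * conj α * redCross P ψ ψ a b + α * conj β * redCross P ψ φ a b +
        β * conj α * redCross P φ ψ a b + β * conj β * redCross P φ φ a b := by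
  simp only [red, redCross, mul_sum, ← sum_add_distrib]
  refine sum_congr rfl fun c _ => ?_
  simp only [Pi.add_apply, Pi.smul_apply, smul_eq_mul, map_add, map_mul]
  ring

theorem redCross_ofReal_smul (r : ℝ) (ψ φ : QState V) (a b : {i // i ∈ P} → Fin 2) :
    redCross P ((r : ℂ) • ψ) ((r : ℂ) • φ) a b = (r ^ 2 : ℝ) * redCross P ψ φ a b := by
  simp only [redCross, mul_sum, Pi.smul_apply, smul_eq_mul, map_mul, Complex.conj_ofReal]
  refine sum_congr rfl fun c _ => ?_
  push_cast
  ring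

theorem redCross_intCast (f g : (V → Fin 2) → ℤ) (a b : {i // i ∈ P} → Fin 2) :
    redCross P (fun x => (f x : ℂ)) (fun x => (g x : ℂ)) a b =
      ((∑ c : {i // i ∉ P} → Fin 2, f (mergeBits P a c) * g (mergeBits P b c) : ℤ) : ℂ) := by
  simp [redCross]

end PartialOverlap

theorem encG_apply {V : Type} [Fintype V] (G : SimpleGraph V) (ℓ x : V → Fin 2) :
    encG G ℓ x = (-1) ^ #{i | ℓ i = 1 ∧ x i = 1} * graphState G x := by
  simp [encG, encSq, Nat.card_eq_fintype_card, Fintype.card_subtype]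

theorem qVal_cycG {n : ℕ} [NeZero n] (hn : 3 ≤ n) (x : Fin n → Fin 2) :
    qVal (cycG n) x = #{i | x i = 1 ∧ x (i + 1) = 1} := by
  have hne1 (i : Fin n) : i ≠ i + 1 := by
    rw [Ne, left_eq_add, Fin.ext_iff, Fin.val_one', Fin.val_zero, Nat.mod_eq_of_lt (by omega)]
    omega
  have hne2 (i : Fin n) : i + 1 + 1 ≠ i := by
    rw [Ne, add_assoc, add_eq_left, Fin.ext_iff, Fin.val_add, Fin.val_one', Fin.val_zero,
      Nat.mod_eq_of_lt (by omega : 1 < n), Nat.mod_eq_of_lt (by omega)]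
    omega
  let edge : {i // x i = 1 ∧ x (i + 1) = 1} →
      {e : Sym2 (Fin n) // e ∈ (cycG n).edgeSet ∧ ∀ v ∈ e, x v = 1} := fun i =>
    ⟨s(i.1, i.1 + 1), ⟨hne1 i, Or.inl rfl⟩, by
      rintro v hv
      rcases Sym2.mem_iff.mp hv with rfl | rfl
      exacts [i.2.1, i.2.2]⟩
  have hedge : Function.Bijective edge := by
    refine ⟨fun i j hij => ?_, ?_⟩
    · simp only [edge, Subtype.mk.injEq, Sym2.eq_iff] at hij
      rcases hij with ⟨h, -⟩ | ⟨h₁, h₂⟩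
      · exact Subtype.ext h
      · exact absurd (h₁ ▸ h₂) (hne2 j)
    · rintro ⟨e, he, hx⟩
      induction e using Sym2.inductionOn with
      | hf u v =>
        have hadj : (cycG n).Adj u v := he
        rcases hadj.2 with rfl | rfl
        · exact ⟨⟨u, hx u (by simp), hx _ (by simp)⟩, rfl⟩
        · exact ⟨⟨v, hx v (by simp), hx _ (by simp)⟩, Subtype.ext Sym2.eq_swap⟩
  rw [qVal, ← Nat.card_eq_of_bijective edge hedge, Nat.card_eq_fintype_card,
    Fintype.card_subtype]

def cycleCodeword {n : ℕ} [NeZero n] (ℓ : Fin 2) (x : Fin n → Fin 2) : ℤ :=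
  (-1) ^ (#{i | ℓ = 1 ∧ x i = 1} + #{i | x i = 1 ∧ x (i + 1) = 1})

theorem encG_cycG_const {n : ℕ} [NeZero n] (hn : 3 ≤ n) (ℓ : Fin 2) :
    encG (cycG n) (fun _ => ℓ) =
      (((Real.sqrt 2)⁻¹ ^ n : ℝ) : ℂ) • fun x => (cycleCodeword ℓ x : ℂ) := by
  funext x
  simp only [encG_apply, graphState, qVal_cycG hn, cycleCodeword, Fintype.card_fin,
    Pi.smul_apply, smul_eq_mul]
  push_cast
  ring

/- Up to the factor `(-1)^{q(a) + q(b)}` the summand is a character of `c`: edges inside the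
complement of `P` are counted twice, and the remaining terms give `⟨Γ(a + b) + (ℓ + ℓ')𝟙, c⟩`,
where `Γ` is the adjacency map from `P` to its complement. For two vertices of the 5-cycle, `Γ`
is injective and its image misses `𝟙`, so the character is trivial iff `ℓ = ℓ'` and `a = b`. -/
theorem sum_cycleCodeword_mul_cycleCodeword_five (P : Finset (Fin 5)) (hP : #P = 2)
    (ℓ ℓ' : Fin 2) (a b : {i // i ∈ P} → Fin 2) :
    ∑ c : {i // i ∉ P} → Fin 2,
        cycleCodeword ℓ (mergeBits P a c) * cycleCodeword ℓ' (mergeBits P b c) =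
      if ℓ = ℓ' ∧ a = b then 8 else 0 := by
  revert ℓ ℓ' P
  decide

/-- secrecy of the (3,5) quantum secret sharing code: for the 5-cycle
code state `|S⟩ = α|G_{00000}⟩ + β|G_{11111}⟩` with `(α,β)` a unit vector, the reduced
state of any two players is the maximally mixed state `Id₄/4`, independent of the
secret. -/
theorem c5_qq_two_players_maximally_mixed (α β : ℂ) (hunit : ‖α‖ ^ 2 + ‖β‖ ^ 2 = 1)
    (P : Finset (Fin 5)) (hP : P.card = 2) :
    red P (α • encG (cycG 5) (fun _ => (0 : Fin 2)) +
           β • encG (cycG 5) fun _ => (1 : Fin 2)) =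
      fun a b => if a = b then (1 / 4 : ℂ) else 0 := by
  funext a b
  have hnorm : (((Real.sqrt 2)⁻¹ ^ 5) ^ 2 : ℝ) = 1 / 32 := by
    rw [← pow_mul, inv_pow, pow_mul', Real.sq_sqrt zero_le_two]
    norm_num
  have hunit' : α * conj α + β * conj β = 1 := by
    simp only [Complex.mul_conj, Complex.normSq_eq_norm_sq]
    exact_mod_cast hunit
  rw [red_smul_add_smul, encG_cycG_const (by norm_num) 0, encG_cycG_const (by norm_num) 1]
  simp only [redCross_ofReal_smul, redCross_intCast, sum_cycleCodeword_mul_cycleCodeword_five P hP,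
    hnorm]
  by_cases hab : a = b <;> simp [hab]
  linear_combination (1 / 4 : ℂ) * hunit'

end
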